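/- Let M_n be the number of Motzkin paths of length n. Then the sequence M_n · n^{3/2} / 3^n converges, as n → ∞, to 3·√3/(2·√π). -/

import Mathlib

/-!
Reflecting the part of a walk after its first visit to `-1` shows that `M n = T n 0 - T n (-2)`,
where `T = numWordsWithSum` counts the words of length `n` in the steps `0, ±1` with sum `h`. Expanding
`(1 + 2 cos θ) ^ n = ∑_w exp (i S(w) θ)` and using orthogonality of the characters `exp (i m θ)`
on `[-π, π]` turns this into `π M n = ∫_{-π}^{π} (1 + 2 cos θ) ^ n sin² θ dθ`. After the
substitution `θ = t / √n`, the integrand times `n / 3 ^ n` tends to `t² exp (-t² / 3)` and is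
dominated by `t² exp (-t² / 10)`, so `π M n n^{3/2} / 3 ^ n → ∫ t² exp (-t² / 3) dt = 3√3 √π / 2`.
-/

open Finset
open scoped Classical

/-- A step: `+1`, `-1` or `0`. -/
abbrev Step : Type := ({1, -1, 0} : Finset ℤ)

/-- Partial sum of the first `k` steps. -/
def psum {n : ℕ} (w : Fin n → Step) (k : ℕ) : ℤ :=
  ∑ i : Fin n, if (i : ℕ) < k then (w i : ℤ) else 0

/-- `w` is a Motzkin path: all partial sums are nonnegative and the total sum is `0`. -/
def IsMotzkin {n : ℕ} (w : Fin n → Step) : Prop :=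
  (∀ k ∈ Finset.range (n + 1), 0 ≤ psum w k) ∧ psum w n = 0

/-- The height of a path: the maximum of its partial sums (`0` for the empty path). -/
def height {n : ℕ} (w : Fin n → Step) : ℤ :=
  (Finset.range (n + 1)).sup' (Finset.nonempty_range_iff.mpr (Nat.succ_ne_zero n)) (psum w)

/-- `w` has a horizontal step at level `j`: some step is `0` and the partial sum up to
and including that step equals `j`. -/
def HasHorizAt {n : ℕ} (w : Fin n → Step) (j : ℤ) : Prop :=
  ∃ i : Fin n, (w i : ℤ) = 0 ∧ psum w ((i : ℕ) + 1) = j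

/-- `M n` is the number of Motzkin paths of length `n`. -/
noncomputable def M (n : ℕ) : ℕ :=
  (Finset.univ.filter fun w : Fin n → Step => IsMotzkin w).card

namespace Step

lemma coe_cases (s : Step) : (s : ℤ) = 1 ∨ (s : ℤ) = -1 ∨ (s : ℤ) = 0 := by
  simpa only [Finset.mem_insert, Finset.mem_singleton] using s.2

def neg (s : Step) : Step :=
  ⟨-s, by rcases coe_cases s with h | h | h <;> simp [h]⟩

@[simp] lemma coe_neg (s : Step) : (s.neg : ℤ) = -s := rfl

@[simp] lemma neg_neg (s : Step) : s.neg.neg = s := Subtype.ext (by simp)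

lemma neg_one_le_coe (s : Step) : -1 ≤ (s : ℤ) := by
  rcases coe_cases s with h | h | h <;> simp [h]

end Step

section PartialSums

variable {n : ℕ}

@[simp] lemma psum_zero (w : Fin n → Step) : psum w 0 = 0 := by
  simp [psum]

lemma psum_succ (w : Fin n → Step) {k : ℕ} (hk : k < n) :
    psum w (k + 1) = psum w k + w ⟨k, hk⟩ := by
  rw [psum, psum, ← Fintype.sum_ite_eq' (⟨k, hk⟩ : Fin n) (fun i => (w i : ℤ)),
    ← Finset.sum_add_distrib]
  refine Finset.sum_congr rfl fun i _ => ?_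
  split_ifs <;> simp_all [Fin.ext_iff] <;> omega

lemma psum_of_le (w : Fin n → Step) {k : ℕ} (hk : n ≤ k) : psum w k = psum w n :=
  Finset.sum_congr rfl fun i _ => by rw [if_pos (i.2.trans_le hk), if_pos i.2]

lemma psum_eq_sum (w : Fin n → Step) : psum w n = ∑ i, (w i : ℤ) :=
  Finset.sum_congr rfl fun i _ => if_pos i.2

lemma psum_sub_one_le_psum_succ (w : Fin n → Step) (k : ℕ) : psum w k - 1 ≤ psum w (k + 1) := by
  rcases lt_or_ge k n with hk | hk
  · linarith [psum_succ w hk, Step.neg_one_le_coe (w ⟨k, hk⟩)]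
  · linarith [psum_of_le w hk, psum_of_le w (hk.trans k.le_succ)]

lemma psum_neg (w : Fin n → Step) (k : ℕ) : psum (fun i => (w i).neg) k = -psum w k := by
  simp only [psum, Step.coe_neg, ← Finset.sum_neg_distrib]
  exact Finset.sum_congr rfl fun i _ => by split_ifs <;> simp

/-- Steps are at least `-1`, so a walk cannot go negative without passing through `-1`. -/
lemma exists_psum_eq_neg_one (w : Fin n → Step) {k : ℕ} (hk : psum w k < 0) :
    ∃ j, psum w j = -1 := by
  induction k with
  | zero => simp at hk
  | succ k ih =>
    by_cases h : psum w k < 0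
    · exact ih h
    · exact ⟨k + 1, by linarith [psum_sub_one_le_psum_succ w k]⟩

lemma isMotzkin_iff {w : Fin n → Step} :
    IsMotzkin w ↔ psum w n = 0 ∧ ∀ k, psum w k ≠ -1 := by
  refine ⟨fun ⟨hnonneg, hsum⟩ => ⟨hsum, fun k => ?_⟩, fun ⟨hsum, hmiss⟩ => ⟨fun k _ => ?_, hsum⟩⟩
  · rcases le_or_gt k n with hk | hk
    · linarith [hnonneg k (Finset.mem_range.mpr (Nat.lt_succ_of_le hk))]
    · rw [psum_of_le w hk.le, hsum]; decide
  · by_contra! hneg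
    obtain ⟨j, hj⟩ := exists_psum_eq_neg_one w hneg
    exact hmiss j hj

end PartialSums

section Reflection

variable {n : ℕ}

-- `0` if `w` never reaches `-1`
noncomputable def firstHit (w : Fin n → Step) : ℕ :=
  if h : ∃ k, psum w k = -1 then Nat.find h else 0

noncomputable def reflectAfterFirstHit (w : Fin n → Step) : Fin n → Step :=
  fun i => if (i : ℕ) < firstHit w then w i else (w i).neg

variable {w : Fin n → Step}

lemma psum_firstHit (h : ∃ k, psum w k = -1) : psum w (firstHit w) = -1 := by
  rw [firstHit, dif_pos h]
  exact Nat.find_spec h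

lemma psum_ne_of_lt_firstHit (h : ∃ k, psum w k = -1) {k : ℕ} (hk : k < firstHit w) :
    psum w k ≠ -1 := by
  rw [firstHit, dif_pos h] at hk
  exact Nat.find_min h hk

lemma firstHit_le (h : ∃ k, psum w k = -1) (hn : psum w n ≠ -1) : firstHit w ≤ n := by
  by_contra! hlt
  exact hn (psum_of_le w hlt.le ▸ psum_firstHit h)

lemma psum_reflectAfterFirstHit_of_le {k : ℕ} (hk : k ≤ firstHit w) :
    psum (reflectAfterFirstHit w) k = psum w k :=
  Finset.sum_congr rfl fun i _ => by
    split_ifs with hi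
    · rw [reflectAfterFirstHit, if_pos (hi.trans_le hk)]
    · rfl

lemma psum_reflectAfterFirstHit_of_ge {k : ℕ} (hk : firstHit w ≤ k) :
    psum (reflectAfterFirstHit w) k = 2 * psum w (firstHit w) - psum w k := by
  rw [eq_sub_iff_add_eq, psum, psum, psum, ← Finset.sum_add_distrib, Finset.mul_sum]
  refine Finset.sum_congr rfl fun i _ => ?_
  simp only [reflectAfterFirstHit]
  split_ifs <;> (try rw [Step.coe_neg]) <;> omega

lemma psum_reflectAfterFirstHit_eq (h : ∃ k, psum w k = -1) (hn : psum w n ≠ -1) :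
    psum (reflectAfterFirstHit w) n = -2 - psum w n := by
  rw [psum_reflectAfterFirstHit_of_ge (firstHit_le h hn), psum_firstHit h]
  ring

lemma exists_psum_reflectAfterFirstHit_eq (h : ∃ k, psum w k = -1) :
    ∃ k, psum (reflectAfterFirstHit w) k = -1 :=
  ⟨firstHit w, by rw [psum_reflectAfterFirstHit_of_le le_rfl, psum_firstHit h]⟩

lemma firstHit_reflectAfterFirstHit (h : ∃ k, psum w k = -1) :
    firstHit (reflectAfterFirstHit w) = firstHit w := by
  have h' := exists_psum_reflectAfterFirstHit_eq h
  refine le_antisymm ?_ (not_lt.mp fun hlt => ?_)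
  · rw [firstHit, dif_pos h']
    exact Nat.find_le (by rw [psum_reflectAfterFirstHit_of_le le_rfl, psum_firstHit h])
  · have := psum_firstHit h'
    rw [psum_reflectAfterFirstHit_of_le hlt.le] at this
    exact psum_ne_of_lt_firstHit h hlt this

lemma reflectAfterFirstHit_reflectAfterFirstHit (h : ∃ k, psum w k = -1) :
    reflectAfterFirstHit (reflectAfterFirstHit w) = w := by
  funext i
  simp only [reflectAfterFirstHit, firstHit_reflectAfterFirstHit h]
  split_ifs <;> simp

end Reflection

noncomputable def numWordsWithSum (n : ℕ) (h : ℤ) : ℕ :=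
  (Finset.univ.filter fun w : Fin n → Step => psum w n = h).card

lemma card_sum_zero_and_hits_eq (n : ℕ) :
    (Finset.univ.filter fun w : Fin n → Step => psum w n = 0 ∧ ∃ k, psum w k = -1).card =
      numWordsWithSum n (-2) := by
  refine Finset.card_nbij' reflectAfterFirstHit reflectAfterFirstHit ?_ ?_ ?_ ?_ <;>
    intro w hw <;>
    simp only [Finset.coe_filter, Finset.mem_univ, true_and, Set.mem_ofPred_eq] at hw ⊢
  · rw [psum_reflectAfterFirstHit_eq hw.2 (by omega), hw.1]
    norm_num
  · have h := exists_psum_eq_neg_one w (k := n) (by omega)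
    exact ⟨by rw [psum_reflectAfterFirstHit_eq h (by omega), hw]; norm_num,
      exists_psum_reflectAfterFirstHit_eq h⟩
  · exact reflectAfterFirstHit_reflectAfterFirstHit hw.2
  · exact reflectAfterFirstHit_reflectAfterFirstHit (exists_psum_eq_neg_one w (k := n) (by omega))

theorem numWordsWithSum_zero_eq (n : ℕ) : numWordsWithSum n 0 = M n + numWordsWithSum n (-2) := by
  rw [← card_sum_zero_and_hits_eq, numWordsWithSum, M,
    ← Finset.card_filter_add_card_filter_not (fun w : Fin n → Step => ∀ k, psum w k ≠ -1),
    Finset.filter_filter, Finset.filter_filter]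
  simp only [isMotzkin_iff, not_forall, not_not]

lemma numWordsWithSum_neg (n : ℕ) (h : ℤ) : numWordsWithSum n (-h) = numWordsWithSum n h := by
  refine Finset.card_nbij' (fun w i => (w i).neg) (fun w i => (w i).neg) ?_ ?_ ?_ ?_ <;>
    intro w hw <;>
    simp only [Finset.coe_filter, Finset.mem_univ, true_and, Set.mem_ofPred_eq, psum_neg,
      Step.neg_neg] at hw ⊢ <;>
    omega

section Fourier

open Complex MeasureTheory
open scoped Real

variable {n : ℕ}

lemma sum_exp_step_mul_I (θ : ℝ) :
    ∑ s : Step, Complex.exp ((s : ℤ) * θ * I) = 1 + 2 * Real.cos θ := by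
  rw [show (univ : Finset Step) = ({1, -1, 0} : Finset ℤ).attach from rfl,
    Finset.sum_attach ({1, -1, 0} : Finset ℤ) fun s : ℤ => Complex.exp (s * θ * I),
    Finset.sum_insert (by decide), Finset.sum_insert (by decide), Finset.sum_singleton,
    ofReal_cos, Complex.cos]
  push_cast
  ring_nf
  rw [Complex.exp_zero]
  ring

lemma one_add_two_cos_pow_eq_sum (θ : ℝ) :
    ((1 : ℂ) + 2 * Real.cos θ) ^ n = ∑ w : Fin n → Step, Complex.exp (psum w n * θ * I) := by
  rw [← sum_exp_step_mul_I, Fintype.sum_pow]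
  refine Finset.sum_congr rfl fun w _ => ?_
  rw [← Complex.exp_sum, psum_eq_sum]
  push_cast
  rw [Finset.sum_mul, Finset.sum_mul]

lemma integral_exp_int_mul_I (m : ℤ) :
    ∫ θ in -π..π, Complex.exp (m * θ * I) = (if m = 0 then 2 * π else 0 : ℂ) := by
  split_ifs with hm
  · simp only [hm, Int.cast_zero, zero_mul, exp_zero, intervalIntegral.integral_const,
      sub_neg_eq_add, real_smul, ofReal_add, mul_one]
    ring
  · have hc : (m : ℂ) * I ≠ 0 := mul_ne_zero (Int.cast_ne_zero.mpr hm) I_ne_zero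
    simp only [show ∀ θ : ℝ, (m : ℂ) * θ * I = m * I * θ from fun θ => by ring]
    rw [integral_exp_mul_complex hc, div_eq_zero_iff, sub_eq_zero, exp_eq_exp_iff_exists_int]
    exact Or.inl ⟨m, by push_cast; ring⟩

lemma integral_one_add_two_cos_pow_mul_exp (h : ℤ) :
    ∫ θ in -π..π, ((1 : ℂ) + 2 * Real.cos θ) ^ n * Complex.exp (-h * θ * I) =
      2 * π * numWordsWithSum n h := by
  have hexpand : ∀ θ : ℝ, ((1 : ℂ) + 2 * Real.cos θ) ^ n * Complex.exp (-h * θ * I) =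
      ∑ w : Fin n → Step, Complex.exp (((psum w n - h : ℤ) : ℂ) * θ * I) := fun θ => by
    rw [one_add_two_cos_pow_eq_sum, Finset.sum_mul]
    refine Finset.sum_congr rfl fun w _ => ?_
    rw [← Complex.exp_add]
    push_cast
    ring_nf
  rw [intervalIntegral.integral_congr fun θ _ => hexpand θ,
    intervalIntegral.integral_finsetSum fun w _ =>
      (by fun_prop : Continuous _).intervalIntegrable _ _]
  simp only [integral_exp_int_mul_I, sub_eq_zero, Finset.sum_ite, Finset.sum_const_zero, add_zero,
    Finset.sum_const, numWordsWithSum, nsmul_eq_mul]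
  ring

lemma ofReal_sin_sq (θ : ℝ) :
    ((Real.sin θ ^ 2 : ℝ) : ℂ) =
      (2 - Complex.exp (-(2 : ℤ) * θ * I) - Complex.exp (-(-2 : ℤ) * θ * I)) / 4 := by
  have h2 : Complex.exp (-(2 : ℤ) * θ * I) = Complex.exp (-θ * I) * Complex.exp (-θ * I) := by
    rw [← Complex.exp_add]; push_cast; ring_nf
  have h2' : Complex.exp (-(-2 : ℤ) * θ * I) = Complex.exp (θ * I) * Complex.exp (θ * I) := by
    rw [← Complex.exp_add]; push_cast; ring_nf
  have hinv : Complex.exp (-θ * I) * Complex.exp (θ * I) = 1 := by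
    rw [← Complex.exp_add]; ring_nf; exact Complex.exp_zero
  rw [ofReal_pow, ofReal_sin, Complex.sin, h2, h2']
  linear_combination (Complex.exp (-θ * I) - Complex.exp (θ * I)) ^ 2 / 4 * I_sq + hinv / 2

theorem integral_one_add_two_cos_pow_mul_sin_sq (n : ℕ) :
    ∫ θ in -π..π, (1 + 2 * Real.cos θ) ^ n * Real.sin θ ^ 2 = π * M n := by
  set F : ℤ → ℝ → ℂ := fun h θ => ((1 : ℂ) + 2 * Real.cos θ) ^ n * Complex.exp (-h * θ * I)
  have hF : ∀ h, IntervalIntegrable (F h) volume (-π) π :=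
    fun h => (by fun_prop : Continuous (F h)).intervalIntegrable _ _
  have hpoint : ∀ θ : ℝ, (((1 + 2 * Real.cos θ) ^ n * Real.sin θ ^ 2 : ℝ) : ℂ) =
      (2 * F 0 θ - F 2 θ - F (-2) θ) / 4 := fun θ => by
    rw [ofReal_mul, ofReal_sin_sq]
    simp only [F]
    push_cast
    ring_nf
    rw [Complex.exp_zero, one_mul]
  have hM := numWordsWithSum_zero_eq n
  have hsymm := numWordsWithSum_neg n 2
  apply Complex.ofReal_injective
  rw [← intervalIntegral.integral_ofReal, intervalIntegral.integral_congr fun θ _ => hpoint θ,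
    intervalIntegral.integral_div, intervalIntegral.integral_sub (((hF 0).const_mul 2).sub (hF 2))
    (hF (-2)), intervalIntegral.integral_sub ((hF 0).const_mul 2) (hF 2),
    intervalIntegral.integral_const_mul]
  simp only [F, integral_one_add_two_cos_pow_mul_exp]
  rw [hM, ← hsymm]
  push_cast
  ring

end Fourier

section Asymptotics

open MeasureTheory Filter Topology Real

lemma abs_one_add_two_cos_div_three_le {θ : ℝ} (hθ : |θ| ≤ π) :
    |(1 + 2 * cos θ) / 3| ≤ exp (-(θ ^ 2 / 10)) := by
  have hπ : π ^ 2 < 10 := by nlinarith [pi_lt_d2, pi_pos]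
  have hθπ : θ ^ 2 ≤ π ^ 2 := by
    rw [← sq_abs θ]
    exact pow_le_pow_left₀ (abs_nonneg θ) hθ 2
  have hthird : 1 / 3 ≤ exp (-(θ ^ 2 / 10)) :=
    calc 1 / 3 ≤ 1 / exp 1 := one_div_le_one_div_of_le (exp_pos 1) (by linarith [exp_one_lt_d9])
      _ = exp (-1) := by rw [exp_neg, one_div]
      _ ≤ exp (-(θ ^ 2 / 10)) := exp_le_exp.mpr (by linarith)
  have hcos : cos θ ≤ 1 - θ ^ 2 / 5 := by
    have : θ ^ 2 / 5 ≤ 2 / π ^ 2 * θ ^ 2 := by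
      rw [div_mul_eq_mul_div, le_div_iff₀ (by positivity)]
      nlinarith [sq_nonneg θ]
    linarith [cos_le_one_sub_mul_cos_sq hθ]
  rw [abs_le]
  constructor
  · linarith [neg_one_le_cos θ]
  · linarith [add_one_le_exp (-(θ ^ 2 / 10)), sq_nonneg θ]

/-- The integrand of `integral_one_add_two_cos_pow_mul_sin_sq` times `n / 3 ^ n`, after the
substitution `θ = t / √n`. -/
noncomputable def rescaledIntegrand (n : ℕ) : ℝ → ℝ :=
  (Set.Ioc (-(π * √n)) (π * √n)).indicator
    fun t => ((1 + 2 * cos (t / √n)) / 3) ^ n * (n * sin (t / √n) ^ 2)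

lemma natCast_mul_div_sqrt_sq {n : ℕ} (hn : n ≠ 0) (t : ℝ) : n * (t / √n) ^ 2 = t ^ 2 := by
  rw [div_pow, sq_sqrt (Nat.cast_nonneg n)]
  field_simp

lemma abs_rescaledIntegrand_le (n : ℕ) (t : ℝ) :
    |rescaledIntegrand n t| ≤ t ^ 2 * exp (-(t ^ 2 / 10)) := by
  by_cases ht : t ∈ Set.Ioc (-(π * √n)) (π * √n)
  swap
  · rw [rescaledIntegrand, Set.indicator_of_notMem ht, abs_zero]
    positivity
  have hn : n ≠ 0 := by
    rintro rfl
    simp only [CharP.cast_eq_zero, sqrt_zero, mul_zero, neg_zero, Set.mem_Ioc] at ht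
    linarith [ht.1, ht.2]
  have hsqrt : 0 < √(n : ℝ) := sqrt_pos.mpr (by positivity)
  have hθ : |t / √n| ≤ π := by
    rw [abs_div, abs_of_pos hsqrt, div_le_iff₀ hsqrt]
    exact abs_le.mpr ⟨by linarith [ht.1], ht.2⟩
  rw [rescaledIntegrand, Set.indicator_of_mem ht, abs_mul, abs_pow,
    abs_of_nonneg (show 0 ≤ (n : ℝ) * sin (t / √n) ^ 2 by positivity)]
  calc |(1 + 2 * cos (t / √n)) / 3| ^ n * (n * sin (t / √n) ^ 2)
      ≤ exp (-((t / √n) ^ 2 / 10)) ^ n * (n * (t / √n) ^ 2) := by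
        gcongr ?_ ^ n * (_ * ?_)
        exacts [abs_one_add_two_cos_div_three_le hθ, sin_sq_le_sq]
    _ = t ^ 2 * exp (-(t ^ 2 / 10)) := by
        rw [← exp_nat_mul, show (n : ℝ) * -((t / √n) ^ 2 / 10) = -(n * (t / √n) ^ 2 / 10) by ring,
          natCast_mul_div_sqrt_sq hn, mul_comm]

lemma tendsto_div_sqrt_natCast (t : ℝ) : Tendsto (fun n : ℕ => t / √n) atTop (𝓝 0) :=
  tendsto_const_nhds.div_atTop (tendsto_sqrt_atTop.comp tendsto_natCast_atTop_atTop)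

-- Going through `sinc` avoids dividing by `t / √n`, which vanishes at `t = 0`.
lemma sin_eq_mul_sinc (x : ℝ) : sin x = x * sinc x := by
  by_cases hx : x = 0
  · simp [hx]
  · rw [sinc_of_ne_zero hx]
    field_simp

lemma one_sub_cos_eq_mul_sinc_sq (x : ℝ) : 1 - cos x = x ^ 2 / 2 * sinc (x / 2) ^ 2 := by
  have hdouble := cos_two_mul (x / 2)
  have hpyth := cos_sq_add_sin_sq (x / 2)
  rw [show 2 * (x / 2) = x by ring] at hdouble
  rw [sin_eq_mul_sinc] at hpyth
  linear_combination -hdouble - 2 * hpyth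

lemma tendsto_natCast_mul_sin_div_sqrt_sq (t : ℝ) :
    Tendsto (fun n : ℕ => n * sin (t / √n) ^ 2) atTop (𝓝 (t ^ 2)) := by
  have hsinc : Tendsto (fun n : ℕ => t ^ 2 * sinc (t / √n) ^ 2) atTop (𝓝 (t ^ 2)) := by
    simpa using tendsto_const_nhds.mul
      (((continuous_sinc.tendsto 0).comp (tendsto_div_sqrt_natCast t)).pow 2)
  refine hsinc.congr' ?_
  filter_upwards [eventually_ne_atTop 0] with n hn
  rw [sin_eq_mul_sinc, mul_pow, ← mul_assoc, natCast_mul_div_sqrt_sq hn]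

lemma tendsto_one_add_two_cos_div_sqrt_div_three_pow (t : ℝ) :
    Tendsto (fun n : ℕ => ((1 + 2 * cos (t / √n)) / 3) ^ n) atTop (𝓝 (exp (-(t ^ 2 / 3)))) := by
  have hhalf : Tendsto (fun n : ℕ => t / √n / 2) atTop (𝓝 0) := by
    simpa using (tendsto_div_sqrt_natCast t).div_const 2
  have hsinc : Tendsto (fun n : ℕ => -(t ^ 2 / 3) * sinc (t / √n / 2) ^ 2) atTop
      (𝓝 (-(t ^ 2 / 3))) := by
    simpa using tendsto_const_nhds.mul (((continuous_sinc.tendsto 0).comp hhalf).pow 2)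
  have hg : Tendsto (fun n : ℕ => n * (-((t / √n) ^ 2 / 3) * sinc (t / √n / 2) ^ 2)) atTop
      (𝓝 (-(t ^ 2 / 3))) := by
    refine hsinc.congr' ?_
    filter_upwards [eventually_ne_atTop 0] with n hn
    rw [← natCast_mul_div_sqrt_sq hn t]
    ring
  refine (tendsto_one_add_pow_exp_of_tendsto hg).congr fun n => ?_
  congr 1
  linear_combination (2 / 3) * one_sub_cos_eq_mul_sinc_sq (t / √n)

lemma tendsto_rescaledIntegrand (t : ℝ) :
    Tendsto (fun n => rescaledIntegrand n t) atTop (𝓝 (t ^ 2 * exp (-(t ^ 2 / 3)))) := by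
  have hmem : ∀ᶠ n : ℕ in atTop, t ∈ Set.Ioc (-(π * √n)) (π * √n) := by
    have : Tendsto (fun n : ℕ => π * √n) atTop atTop :=
      (tendsto_sqrt_atTop.comp tendsto_natCast_atTop_atTop).const_mul_atTop pi_pos
    filter_upwards [this.eventually_gt_atTop |t|] with n hn
    exact ⟨by linarith [neg_abs_le t], by linarith [le_abs_self t]⟩
  rw [mul_comm]
  refine ((tendsto_one_add_two_cos_div_sqrt_div_three_pow t).mul
    (tendsto_natCast_mul_sin_div_sqrt_sq t)).congr' ?_
  filter_upwards [hmem] with n hn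
  rw [rescaledIntegrand, Set.indicator_of_mem hn]

lemma integral_sq_mul_exp_neg_sq_div_three :
    ∫ t : ℝ, t ^ 2 * exp (-(t ^ 2 / 3)) = 3 * √3 * √π / 2 := by
  have hGamma : Gamma ((2 + 1) / 2) = √π / 2 := by
    rw [show ((2 + 1) / 2 : ℝ) = 1 / 2 + 1 by norm_num, Gamma_add_one (by norm_num),
      Gamma_one_half_eq]
    ring
  have hpow : (1 / 3 : ℝ) ^ (-(2 + 1) / 2 : ℝ) = 3 * √3 := by
    rw [show (-(2 + 1) / 2 : ℝ) = -(1 + 1 / 2) by norm_num, rpow_neg (by norm_num), one_div,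
      inv_rpow (by norm_num), inv_inv, rpow_add (by norm_num), rpow_one, ← sqrt_eq_rpow]
  have hhalf : ∫ t in Set.Ioi 0, t ^ 2 * exp (-(t ^ 2 / 3)) = 3 * √3 * √π / 4 := by
    have h := integral_rpow_mul_exp_neg_mul_rpow (p := 2) (q := 2) (b := 1 / 3)
      (by norm_num) (by norm_num) (by norm_num)
    simp only [rpow_two, hGamma, hpow] at h
    rw [show (fun t : ℝ => t ^ 2 * exp (-(t ^ 2 / 3))) = fun t => t ^ 2 * exp (-(1 / 3) * t ^ 2) by
      ext; ring_nf, h]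
    ring
  rw [show (fun t : ℝ => t ^ 2 * exp (-(t ^ 2 / 3))) = fun t => |t| ^ 2 * exp (-(|t| ^ 2 / 3)) by
    simp only [sq_abs], integral_comp_abs (f := fun t => t ^ 2 * exp (-(t ^ 2 / 3))), hhalf]
  ring

lemma tendsto_integral_rescaledIntegrand :
    Tendsto (fun n => ∫ t, rescaledIntegrand n t) atTop (𝓝 (3 * √3 * √π / 2)) := by
  have hbound : Integrable fun t : ℝ => t ^ 2 * exp (-(t ^ 2 / 10)) := by
    refine (integrable_rpow_mul_exp_neg_mul_sq (b := 1 / 10) (by norm_num) (s := 2)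
      (by norm_num)).congr (Eventually.of_forall fun t => ?_)
    simp only [rpow_two]
    ring_nf
  have hmeas : ∀ n, AEStronglyMeasurable (rescaledIntegrand n) :=
    fun n => (Continuous.aestronglyMeasurable (by fun_prop)).indicator measurableSet_Ioc
  rw [← integral_sq_mul_exp_neg_sq_div_three]
  exact tendsto_integral_of_dominated_convergence _ hmeas hbound
    (fun n => Eventually.of_forall fun t => (norm_eq_abs _).trans_le (abs_rescaledIntegrand_le n t))
    (Eventually.of_forall tendsto_rescaledIntegrand)

lemma integral_rescaledIntegrand {n : ℕ} (hn : n ≠ 0) :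
    ∫ t, rescaledIntegrand n t = π * (M n * (n : ℝ) ^ ((3 : ℝ) / 2) / 3 ^ n) := by
  have hsqrt : 0 < √(n : ℝ) := sqrt_pos.mpr (by positivity)
  have hpow : (n : ℝ) ^ ((3 : ℝ) / 2) = n * √n := by
    rw [show (3 / 2 : ℝ) = 1 + 1 / 2 by norm_num, rpow_add (by positivity), rpow_one,
      ← sqrt_eq_rpow]
  have hsubst : ∫ t in -(π * √n)..π * √n, (1 + 2 * cos (t / √n)) ^ n * sin (t / √n) ^ 2 =
      √n * ∫ θ in -π..π, (1 + 2 * cos θ) ^ n * sin θ ^ 2 := by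
    rw [intervalIntegral.integral_comp_div (fun θ => (1 + 2 * cos θ) ^ n * sin θ ^ 2) hsqrt.ne',
      neg_div, mul_div_cancel_right₀ _ hsqrt.ne', smul_eq_mul]
  calc ∫ t, rescaledIntegrand n t
      = ∫ t in -(π * √n)..π * √n, ((1 + 2 * cos (t / √n)) / 3) ^ n * (n * sin (t / √n) ^ 2) := by
        rw [intervalIntegral.integral_of_le (by nlinarith [pi_pos]), ← integral_indicator
          measurableSet_Ioc]
        rfl
    _ = n / 3 ^ n * ∫ t in -(π * √n)..π * √n, (1 + 2 * cos (t / √n)) ^ n * sin (t / √n) ^ 2 := by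
        rw [← intervalIntegral.integral_const_mul]
        congr 1
        ext t
        rw [div_pow]
        ring
    _ = π * (M n * (n : ℝ) ^ ((3 : ℝ) / 2) / 3 ^ n) := by
        rw [hsubst, integral_one_add_two_cos_pow_mul_sin_sq, hpow]
        ring

end Asymptotics

open Filter in
/-- `M n · n^{3/2} / 3^n → 3√3 / (2√π)`. -/
theorem motzkin_asymptotics :
    Tendsto (fun n : ℕ => (M n : ℝ) * (n : ℝ) ^ ((3 : ℝ) / 2) / 3 ^ n) atTop
      (nhds (3 * Real.sqrt 3 / (2 * Real.sqrt Real.pi))) := by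
  have hlim : 3 * Real.sqrt 3 / (2 * Real.sqrt Real.pi) =
      (3 * Real.sqrt 3 * Real.sqrt Real.pi / 2) / Real.pi := by
    have hne : Real.sqrt Real.pi ≠ 0 := by positivity
    field_simp
    exact (Real.sq_sqrt Real.pi_pos.le).symm
  rw [hlim]
  refine (tendsto_integral_rescaledIntegrand.div_const Real.pi).congr' ?_
  filter_upwards [eventually_ne_atTop 0] with n hn
  rw [integral_rescaledIntegrand hn]
  field_simp
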